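/- First moment of the Lorentz force term: let f : ℝ³ → ℝ be continuously differentiable with compact support and let E, B ∈ ℝ³. Then ∫_{ℝ³} v · ((E + v × B) · ∇f(v)) dv = −((∫_{ℝ³} f(v) dv) · E + (∫_{ℝ³} v f(v) dv) × B), as an identity in ℝ³; that is, for each component i, ∫_{ℝ³} v_i (E + v × B) · ∇f(v) dv = −E_i ∫ f dv − ((∫ v f dv) × B)_i. (This is the integration-by-parts identity behind the macroscopic velocity equation du/dt = E + u × B in the Lorentz-force step of the moment system.) -/

import Mathlib

open scoped RealInnerProductSpace
open MeasureTheory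

/-- The standard cross product on Euclidean three-space. -/
noncomputable def cross3 (a b : EuclideanSpace ℝ (Fin 3)) : EuclideanSpace ℝ (Fin 3) :=
  (EuclideanSpace.equiv (Fin 3) ℝ).symm
    ![a 1 * b 2 - a 2 * b 1, a 2 * b 0 - a 0 * b 2, a 0 * b 1 - a 1 * b 0]

namespace FML

noncomputable def cj (B : EuclideanSpace ℝ (Fin 3)) : Fin 3 → (EuclideanSpace ℝ (Fin 3) →L[ℝ] ℝ) :=
  ![B 2 • EuclideanSpace.proj 1 - B 1 • EuclideanSpace.proj 2,
    B 0 • EuclideanSpace.proj 2 - B 2 • EuclideanSpace.proj 0,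
    B 1 • EuclideanSpace.proj 0 - B 0 • EuclideanSpace.proj 1]

lemma cross3_apply (v B : EuclideanSpace ℝ (Fin 3)) (j : Fin 3) :
    cross3 v B j = cj B j v := by
  fin_cases j <;> simp [cross3, cj] <;> ring

lemma cj_single (B : EuclideanSpace ℝ (Fin 3)) (j : Fin 3) :
    cj B j (EuclideanSpace.single j (1:ℝ)) = 0 := by
  fin_cases j <;> simp [cj, EuclideanSpace.single_apply]

lemma key_j (f : EuclideanSpace ℝ (Fin 3) → ℝ)
    (hf : ContDiff ℝ 1 f) (hsupp : HasCompactSupport f)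
    (E B : EuclideanSpace ℝ (Fin 3)) (i j : Fin 3) :
    ∫ x : EuclideanSpace ℝ (Fin 3),
        (E j + cj B j x) * (x i * fderiv ℝ f x (EuclideanSpace.single j (1:ℝ)))
      = -(EuclideanSpace.single j (1:ℝ) i) *
          ∫ x : EuclideanSpace ℝ (Fin 3), f x * (E j + cj B j x) := by
  set e : EuclideanSpace ℝ (Fin 3) := EuclideanSpace.single j (1:ℝ) with he
  set Fj : EuclideanSpace ℝ (Fin 3) → ℝ := fun x => E j + cj B j x with hFj
  have FjC : Continuous Fj := continuous_const.add (cj B j).continuous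
  have Fjlip : LipschitzWith (‖cj B j‖₊) Fj := fun x y => by
    simpa [Fj, edist_add_left] using (cj B j).lipschitz x y
  have hFjd : ∀ x, HasFDerivAt Fj (cj B j) x := fun x => ((cj B j).hasFDerivAt).const_add (E j)
  set hi : EuclideanSpace ℝ (Fin 3) → ℝ := fun v => v i * f v with hhi
  have hic : HasCompactSupport hi := hsupp.mul_left
  have hicd : ContDiff ℝ 1 hi := (EuclideanSpace.proj i).contDiff.mul hf
  obtain ⟨D, hil⟩ := hicd.lipschitzWith_of_hasCompactSupport hic one_ne_zero
  have hid : ∀ x, HasFDerivAt hi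
      ((x i) • fderiv ℝ f x + (f x) • (EuclideanSpace.proj i : EuclideanSpace ℝ (Fin 3) →L[ℝ] ℝ)) x :=
    fun x => ((EuclideanSpace.proj i).hasFDerivAt).mul ((hf.differentiable one_ne_zero) x).hasFDerivAt
  have IB := LipschitzWith.integral_lineDeriv_mul_eq (μ := volume) Fjlip hil hic e
  have hL : ∀ x, lineDeriv ℝ Fj x e = 0 := by
    intro x
    rw [(hFjd x).differentiableAt.lineDeriv_eq_fderiv, (hFjd x).fderiv, he, cj_single]
  have hR : ∀ x : EuclideanSpace ℝ (Fin 3), lineDeriv ℝ hi x (-e)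
      = -(x i * fderiv ℝ f x e) - f x * (e i) := by
    intro x
    rw [(hid x).differentiableAt.lineDeriv_eq_fderiv, (hid x).fderiv]
    simp [mul_comm]
    ring
  have hdC : Continuous fun x => fderiv ℝ f x e :=
    (hf.continuous_fderiv one_ne_zero).clm_apply continuous_const
  have hdS : HasCompactSupport fun x => fderiv ℝ f x e := hsupp.fderiv_apply ℝ e
  have IA : Integrable (fun x => Fj x * (x i * fderiv ℝ f x e)) :=
    (FjC.mul (((EuclideanSpace.proj i).continuous).mul hdC)).integrable_of_hasCompactSupport
      (hdS.mul_left.mul_left)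
  have IC : Integrable (fun x => f x * Fj x) :=
    (hf.continuous.mul FjC).integrable_of_hasCompactSupport hsupp.mul_right
  have h1 : ∫ x : EuclideanSpace ℝ (Fin 3), lineDeriv ℝ Fj x e * hi x = 0 := by
    simp [hL]
  have h2 : ∫ x : EuclideanSpace ℝ (Fin 3), lineDeriv ℝ hi x (-e) * Fj x
      = -(∫ x : EuclideanSpace ℝ (Fin 3), Fj x * (x i * fderiv ℝ f x e))
        + (-(e i)) * ∫ x : EuclideanSpace ℝ (Fin 3), f x * Fj x := by
    have hpt : ∀ x : EuclideanSpace ℝ (Fin 3), lineDeriv ℝ hi x (-e) * Fj x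
        = -(Fj x * (x i * fderiv ℝ f x e)) + (-(e i)) * (f x * Fj x) := fun x => by
      rw [hR x]; ring
    calc ∫ x : EuclideanSpace ℝ (Fin 3), lineDeriv ℝ hi x (-e) * Fj x
        = ∫ x : EuclideanSpace ℝ (Fin 3),
            (-(Fj x * (x i * fderiv ℝ f x e)) + (-(e i)) * (f x * Fj x)) := by simp_rw [hpt]
      _ = -(∫ x : EuclideanSpace ℝ (Fin 3), Fj x * (x i * fderiv ℝ f x e))
            + (-(e i)) * ∫ x : EuclideanSpace ℝ (Fin 3), f x * Fj x := by
          have IA' : Integrable (fun x : EuclideanSpace ℝ (Fin 3) =>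
              -(Fj x * (x i * fderiv ℝ f x e))) volume := IA.neg
          have IC' : Integrable (fun x : EuclideanSpace ℝ (Fin 3) =>
              (-(e i)) * (f x * Fj x)) volume := IC.const_mul _
          rw [integral_add IA' IC', integral_neg, integral_const_mul]
  rw [h1, h2] at IB
  linarith [IB]


end FML

open FML

/-- First moment of the Lorentz force term: for `f` continuously differentiable
with compact support, `∫ v ((E + v×B)·∇f(v)) dv = −((∫ f)E + (∫ v f dv) × B)`. -/
theorem first_moment_lorentz_force
    (f : EuclideanSpace ℝ (Fin 3) → ℝ)
    (hf : ContDiff ℝ 1 f) (hsupp : HasCompactSupport f)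
    (E B : EuclideanSpace ℝ (Fin 3)) :
    (∫ v : EuclideanSpace ℝ (Fin 3), ⟪E + cross3 v B, gradient f v⟫ • v)
      = -((∫ v : EuclideanSpace ℝ (Fin 3), f v) • E
          + cross3 (∫ v : EuclideanSpace ℝ (Fin 3), f v • v) B) := by
  classical
  set e : Fin 3 → EuclideanSpace ℝ (Fin 3) := fun j => EuclideanSpace.single j (1:ℝ) with he
  have hgrad : ∀ (v : EuclideanSpace ℝ (Fin 3)) (j : Fin 3),
      gradient f v j = fderiv ℝ f v (e j) := by
    intro v j
    have h1 : ⟪gradient f v, e j⟫ = fderiv ℝ f v (e j) := InnerProductSpace.toDual_symm_apply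
    rw [he] at h1 ⊢
    rw [EuclideanSpace.inner_single_right] at h1
    simpa using h1
  have hinner : ∀ v : EuclideanSpace ℝ (Fin 3), ⟪E + cross3 v B, gradient f v⟫
      = ∑ j : Fin 3, (E j + cj B j v) * fderiv ℝ f v (e j) := by
    intro v
    rw [PiLp.inner_apply]
    refine Finset.sum_congr rfl fun j _ => ?_
    simp [cross3_apply, RCLike.inner_apply, hgrad]
    ring
  have hgradzero : ∀ v : EuclideanSpace ℝ (Fin 3), v ∉ tsupport f → gradient f v = 0 := by
    intro v hv
    have h0 : fderiv ℝ f v = 0 := by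
      by_contra h
      exact hv (support_fderiv_subset ℝ (Function.mem_support.2 h))
    have : gradient f v = (InnerProductSpace.toDual ℝ _).symm (fderiv ℝ f v) := rfl
    rw [this, h0, map_zero]
  have hdC : ∀ j, Continuous fun x : EuclideanSpace ℝ (Fin 3) => fderiv ℝ f x (e j) :=
    fun j => (hf.continuous_fderiv one_ne_zero).clm_apply continuous_const
  have hdS : ∀ j, HasCompactSupport fun x : EuclideanSpace ℝ (Fin 3) => fderiv ℝ f x (e j) :=
    fun j => hsupp.fderiv_apply ℝ (e j)
  have If : Integrable f volume := hf.continuous.integrable_of_hasCompactSupport hsupp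
  have Ifv : Integrable (fun v : EuclideanSpace ℝ (Fin 3) => f v • v) volume := by
    refine (hf.continuous.smul continuous_id).integrable_of_hasCompactSupport ?_
    refine HasCompactSupport.intro hsupp fun v hv => ?_
    have : f v = 0 := image_eq_zero_of_notMem_tsupport hv
    simp [this]
  have Ic : Integrable (fun v : EuclideanSpace ℝ (Fin 3) =>
      (⟪E + cross3 v B, gradient f v⟫ : ℝ) • v) volume := by
    have hcc : Continuous fun v : EuclideanSpace ℝ (Fin 3) =>
        (⟪E + cross3 v B, gradient f v⟫ : ℝ) := by
      have h1 : (fun v : EuclideanSpace ℝ (Fin 3) => (⟪E + cross3 v B, gradient f v⟫ : ℝ))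
          = fun v => ∑ j : Fin 3, (E j + cj B j v) * fderiv ℝ f v (e j) := funext hinner
      rw [h1]
      exact continuous_finset_sum _ fun j _ =>
        (continuous_const.add (cj B j).continuous).mul (hdC j)
    refine (hcc.smul continuous_id).integrable_of_hasCompactSupport ?_
    refine HasCompactSupport.intro hsupp fun v hv => ?_
    show (⟪E + cross3 v B, gradient f v⟫ : ℝ) • v = 0
    rw [hgradzero v hv]
    simp
  have hproj : ∀ (g : EuclideanSpace ℝ (Fin 3) → ℝ)
      (_ : Integrable (fun v : EuclideanSpace ℝ (Fin 3) => g v • v) volume) (i : Fin 3),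
      (∫ v : EuclideanSpace ℝ (Fin 3), g v • v) i = ∫ v : EuclideanSpace ℝ (Fin 3), g v * v i := by
    intro g hg i
    calc (∫ v : EuclideanSpace ℝ (Fin 3), g v • v) i
        = EuclideanSpace.proj i (∫ v : EuclideanSpace ℝ (Fin 3), g v • v) := rfl
      _ = ∫ v : EuclideanSpace ℝ (Fin 3), EuclideanSpace.proj i (g v • v) :=
          ((EuclideanSpace.proj i).integral_comp_comm hg).symm
      _ = ∫ v : EuclideanSpace ℝ (Fin 3), g v * v i := by
          refine integral_congr_ae (Filter.Eventually.of_forall fun v => ?_)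
          simp
  have IAj : ∀ (i j : Fin 3), Integrable (fun x : EuclideanSpace ℝ (Fin 3) =>
      (E j + cj B j x) * (x i * fderiv ℝ f x (e j))) volume := fun i j =>
    ((continuous_const.add (cj B j).continuous).mul
      (((EuclideanSpace.proj i).continuous).mul (hdC j))).integrable_of_hasCompactSupport
      ((hdS j).mul_left.mul_left)
  have ICj : ∀ j : Fin 3, Integrable (fun x : EuclideanSpace ℝ (Fin 3) =>
      f x * cj B j x) volume := fun j =>
    (hf.continuous.mul (cj B j).continuous).integrable_of_hasCompactSupport hsupp.mul_right
  refine PiLp.ext fun i => ?_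
  have main : (∫ v : EuclideanSpace ℝ (Fin 3), ⟪E + cross3 v B, gradient f v⟫ • v) i
      = -(E i * ∫ v : EuclideanSpace ℝ (Fin 3), f v)
        - cj B i (∫ v : EuclideanSpace ℝ (Fin 3), f v • v) := by
    calc (∫ v : EuclideanSpace ℝ (Fin 3), ⟪E + cross3 v B, gradient f v⟫ • v) i
        = ∫ v : EuclideanSpace ℝ (Fin 3), ⟪E + cross3 v B, gradient f v⟫ * v i := hproj _ Ic i
      _ = ∫ v : EuclideanSpace ℝ (Fin 3),
            ∑ j : Fin 3, (E j + cj B j v) * (v i * fderiv ℝ f v (e j)) := by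
          refine integral_congr_ae (Filter.Eventually.of_forall fun v => ?_)
          simp only [hinner v, Finset.sum_mul]
          exact Finset.sum_congr rfl fun j _ => by ring
      _ = ∑ j : Fin 3, ∫ v : EuclideanSpace ℝ (Fin 3),
            (E j + cj B j v) * (v i * fderiv ℝ f v (e j)) :=
          integral_finset_sum _ fun j _ => IAj i j
      _ = ∑ j : Fin 3, -(e j i) * ∫ x : EuclideanSpace ℝ (Fin 3), f x * (E j + cj B j x) := by
          exact Finset.sum_congr rfl fun j _ => key_j f hf hsupp E B i j
      _ = -∫ x : EuclideanSpace ℝ (Fin 3), f x * (E i + cj B i x) := by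
          rw [Finset.sum_eq_single i]
          · simp [he, EuclideanSpace.single_apply]
          · intro j _ hji
            have : e j i = 0 := by simp [he, EuclideanSpace.single_apply, Ne.symm hji]
            simp [this]
          · simp
      _ = -(E i * ∫ v : EuclideanSpace ℝ (Fin 3), f v)
            - cj B i (∫ v : EuclideanSpace ℝ (Fin 3), f v • v) := by
          have hsplit : ∫ x : EuclideanSpace ℝ (Fin 3), f x * (E i + cj B i x)
              = (∫ x : EuclideanSpace ℝ (Fin 3), f x * E i)
                + ∫ x : EuclideanSpace ℝ (Fin 3), f x * cj B i x := by
            rw [← integral_add (If.mul_const _) (ICj i)]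
            refine integral_congr_ae (Filter.Eventually.of_forall fun x => ?_)
            ring
          have hcomm : ∫ x : EuclideanSpace ℝ (Fin 3), f x * cj B i x
              = cj B i (∫ v : EuclideanSpace ℝ (Fin 3), f v • v) := by
            rw [← (cj B i).integral_comp_comm Ifv]
            refine integral_congr_ae (Filter.Eventually.of_forall fun x => ?_)
            simp
          rw [hsplit, hcomm, integral_mul_const]
          ring
  rw [main]
  simp only [PiLp.neg_apply, PiLp.add_apply, PiLp.smul_apply, smul_eq_mul, cross3_apply]
  ring
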